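/- arXiv:0909.4547 — 5 statements merged into one kernel-verified Lean document; each statement's English description precedes it below -/
import Mathlib

section
/- Let M be a matroid on ground set E with a fixed linear order, and for 0 ≤ i ≤ r(M) let nbc_i(M) denote the number of independent sets of size i containing no broken circuit. Then nbc_i(M) = (−1)^i times the coefficient of t^{r(M)−i} in the characteristic polynomial of M (equivalently, nbc_i(M) is the i-th Whitney number of the first kind up to sign). -/
open scoped Classical
open Polynomial Finset

variable {α : Type*}

/-- A circuit of a matroid: a minimal dependent (finite) set. -/
def IsCircuit (M : Matroid α) (C : Finset α) : Prop :=
  M.Dep (C : Set α) ∧ ∀ D : Finset α, D ⊂ C → M.Indep (D : Set α)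

/-- A broken circuit with respect to a linear order: a circuit with its largest
element removed. -/
def IsBrokenCircuit [LinearOrder α] (M : Matroid α) (B : Finset α) : Prop :=
  ∃ C : Finset α, IsCircuit M C ∧ ∃ u ∈ C, (∀ v ∈ C, v ≤ u) ∧ B = C.erase u

/-- `S` contains no broken circuit. -/
def NoBrokenCircuit [LinearOrder α] (M : Matroid α) (S : Finset α) : Prop :=
  ∀ B : Finset α, IsBrokenCircuit M B → ¬ B ⊆ S

/-- The rank of a finite set in a matroid: the maximal size of an independent subset. -/
noncomputable def mrank (M : Matroid α) (S : Finset α) : ℕ :=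
  (S.powerset.filter fun T : Finset α => M.Indep (T : Set α)).sup Finset.card

/-- The characteristic polynomial of a (finite) matroid:
`χ_M(t) = Σ_{S ⊆ E} (−1)^{|S|} t^{r(M) − r(S)}`. -/
noncomputable def matCharPoly [Fintype α] (M : Matroid α) : Polynomial ℤ :=
  ∑ S : Finset α, (-1 : ℤ[X]) ^ S.card * X ^ (mrank M univ - mrank M S)

/-!
The coefficient of `t ^ (r(M) - i)` in `χ_M` is the signed count `∑ (-1) ^ |S|` over the sets
`S` of rank `i`. On the sets containing a broken circuit, toggling the least element `u` that is
the top of a circuit `C` with `C \ {u} ⊆ S` is a sign-reversing involution: `u` lies in the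
closure of `S \ {u}`, so the rank is unchanged, and the toggled set has the same least top.
The surviving sets of rank `i` contain no broken circuit; such sets contain no circuit either,
so they are exactly the independent `i`-sets without broken circuits, each of sign `(-1) ^ i`.
-/

section Rank

variable {M : Matroid α}

lemma mrank_eq_eRk (M : Matroid α) (S : Finset α) : (mrank M S : ℕ∞) = M.eRk S := by
  refine le_antisymm ?_ ?_
  · have hne : (S.powerset.filter fun T : Finset α => M.Indep (T : Set α)).Nonempty :=
      ⟨∅, by simp⟩
    obtain ⟨T, hT, hmax⟩ := Finset.exists_mem_eq_sup _ hne Finset.card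
    rw [Finset.mem_filter, Finset.mem_powerset] at hT
    rw [mrank, hmax, ← Set.encard_coe_eq_coe_finsetCard]
    exact hT.2.encard_le_eRk_of_subset (by exact_mod_cast hT.1)
  · obtain ⟨I, hI⟩ := M.exists_isBasis' (S : Set α)
    lift I to Finset α using (S.finite_toSet.subset hI.subset)
    rw [← hI.encard_eq_eRk, Set.encard_coe_eq_coe_finsetCard, Nat.cast_le]
    exact Finset.le_sup (by simpa using ⟨hI.subset, hI.indep⟩)

lemma mrank_eq_card {S : Finset α} (hS : M.Indep S) : mrank M S = #S := by
  rw [← Nat.cast_inj (R := ℕ∞), mrank_eq_eRk, hS.eRk_eq_encard,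
    Set.encard_coe_eq_coe_finsetCard]

lemma mrank_le_mrank {S T : Finset α} (h : S ⊆ T) : mrank M S ≤ mrank M T := by
  rw [← Nat.cast_le (α := ℕ∞), mrank_eq_eRk, mrank_eq_eRk]
  exact M.eRk_mono (by exact_mod_cast h)

lemma Matroid.eRk_eq_of_subset_of_subset_insert {X Y : Set α} {u : α} (hu : u ∈ M.closure Y)
    (hYX : Y ⊆ X) (hXY : X ⊆ insert u Y) : M.eRk X = M.eRk Y := by
  refine le_antisymm ?_ (M.eRk_mono hYX)
  calc M.eRk X ≤ M.eRk (insert u Y) := M.eRk_mono hXY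
    _ = M.eRk (M.closure Y) := by rw [← M.eRk_insert_closure_eq, Set.insert_eq_of_mem hu]
    _ = M.eRk Y := M.eRk_closure_eq Y

lemma mrank_eq_of_mem_closure_erase [DecidableEq α] {S X : Finset α} {u : α}
    (hu : u ∈ M.closure ↑(S.erase u)) (hSX : S.erase u ⊆ X) (hXS : X ⊆ insert u S) :
    mrank M X = mrank M S := by
  have between {Z : Finset α} (h₁ : S.erase u ⊆ Z) (h₂ : Z ⊆ insert u S) :
      mrank M Z = mrank M (S.erase u) := by
    rw [← Nat.cast_inj (R := ℕ∞), mrank_eq_eRk, mrank_eq_eRk]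
    refine M.eRk_eq_of_subset_of_subset_insert hu (by exact_mod_cast h₁) ?_
    rw [Finset.coe_erase, Set.insert_sdiff_singleton]
    exact (Finset.coe_subset.2 h₂).trans (by simp)
  rw [between hSX hXS, between (S.erase_subset u) (S.subset_insert u)]

end Rank

lemma isCircuit_iff_isCircuit_coe {M : Matroid α} {C : Finset α} :
    IsCircuit M C ↔ M.IsCircuit C := by
  rw [Matroid.isCircuit_iff_forall_ssubset, IsCircuit]
  refine and_congr_right fun _ ↦ ⟨fun h I hI ↦ ?_, fun h D hD ↦ h (by exact_mod_cast hD)⟩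
  lift I to Finset α using (C.finite_toSet.subset hI.subset)
  exact h I (by exact_mod_cast hI)

section Toggle

variable [DecidableEq α] (S : Finset α) (u : α)

lemma Finset.erase_subset_symmDiff_singleton : S.erase u ⊆ symmDiff S {u} := by
  intro x
  simp only [mem_erase, mem_symmDiff, mem_singleton]
  tauto

lemma Finset.symmDiff_singleton_subset_insert : symmDiff S {u} ⊆ insert u S := by
  intro x
  simp only [mem_insert, mem_symmDiff, mem_singleton]
  tauto

lemma Finset.neg_one_pow_card_symmDiff_singleton : (-1 : ℤ) ^ #(symmDiff S {u}) = -(-1) ^ #S := by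
  by_cases h : u ∈ S
  · have : symmDiff S {u} = S.erase u := by ext; simp [mem_symmDiff]; grind
    rw [this, ← card_erase_add_one h, pow_succ, mul_neg_one, neg_neg]
  · have : symmDiff S {u} = insert u S := by ext; simp [mem_symmDiff]; grind
    rw [this, card_insert_of_notMem h, pow_succ, mul_neg_one]

end Toggle

section BrokenCircuitTops

variable [Fintype α] [LinearOrder α] {M : Matroid α} {S X : Finset α} {u : α}

noncomputable def brokenCircuitTops (M : Matroid α) (S : Finset α) : Finset α :=
  univ.filter fun u ↦
    ∃ C, IsCircuit M C ∧ u ∈ C ∧ (∀ v ∈ C, v ≤ u) ∧ C.erase u ⊆ S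

lemma mem_brokenCircuitTops : u ∈ brokenCircuitTops M S ↔
    ∃ C, IsCircuit M C ∧ u ∈ C ∧ (∀ v ∈ C, v ≤ u) ∧ C.erase u ⊆ S := by
  simp [brokenCircuitTops]

lemma not_noBrokenCircuit_iff : ¬ NoBrokenCircuit M S ↔ (brokenCircuitTops M S).Nonempty := by
  simp only [NoBrokenCircuit, IsBrokenCircuit, Finset.Nonempty, mem_brokenCircuitTops]
  aesop

lemma brokenCircuitTops_mono (h : S ⊆ X) : brokenCircuitTops M S ⊆ brokenCircuitTops M X := by
  intro u hu
  obtain ⟨C, hC, huC, hmax, hCS⟩ := mem_brokenCircuitTops.1 hu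
  exact mem_brokenCircuitTops.2 ⟨C, hC, huC, hmax, hCS.trans h⟩

lemma mem_brokenCircuitTops_erase (hu : u ∈ brokenCircuitTops M S) :
    u ∈ brokenCircuitTops M (S.erase u) := by
  obtain ⟨C, hC, huC, hmax, hCS⟩ := mem_brokenCircuitTops.1 hu
  refine mem_brokenCircuitTops.2 ⟨C, hC, huC, hmax, fun x hx ↦ ?_⟩
  exact mem_erase.2 ⟨(mem_erase.1 hx).1, hCS hx⟩

lemma mem_closure_erase_of_mem_brokenCircuitTops (hu : u ∈ brokenCircuitTops M S) :
    u ∈ M.closure ↑(S.erase u) := by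
  obtain ⟨C, hC, huC, -, hCS⟩ := mem_brokenCircuitTops.1 (mem_brokenCircuitTops_erase hu)
  have hcl := (isCircuit_iff_isCircuit_coe.1 hC).mem_closure_sdiff_singleton_of_mem huC
  rw [← Finset.coe_singleton, ← Finset.coe_sdiff, sdiff_singleton_eq_erase] at hcl
  exact M.closure_subset_closure (by exact_mod_cast hCS) hcl

lemma isLeast_brokenCircuitTops (hu : IsLeast ↑(brokenCircuitTops M S) u)
    (hSX : S.erase u ⊆ X) (hXS : X ⊆ insert u S) : IsLeast ↑(brokenCircuitTops M X) u := by
  refine ⟨brokenCircuitTops_mono hSX (mem_brokenCircuitTops_erase hu.1), fun v hv ↦ ?_⟩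
  by_contra! hvu
  -- a top `v < u` of `X` comes from a circuit all of whose elements are `< u`
  obtain ⟨C, hC, hvC, hmax, hCX⟩ := mem_brokenCircuitTops.1 (brokenCircuitTops_mono hXS hv)
  have hCS : C.erase v ⊆ S := fun x hx ↦
    (mem_insert.1 (hCX hx)).resolve_left
      fun hxu ↦ (hmax x (mem_of_mem_erase hx)).not_gt (hxu ▸ hvu)
  exact (hu.2 (mem_brokenCircuitTops.2 ⟨C, hC, hvC, hmax, hCS⟩)).not_gt hvu

end BrokenCircuitTops

lemma indep_of_noBrokenCircuit [LinearOrder α] {M : Matroid α} (hE : M.E = Set.univ)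
    {S : Finset α} (h : NoBrokenCircuit M S) : M.Indep S := by
  by_contra hS
  obtain ⟨C, hCS, hC⟩ := ((M.not_indep_iff (by simp [hE])).1 hS).exists_isCircuit_subset
  lift C to Finset α using S.finite_toSet.subset hCS
  have hne : C.Nonempty := by exact_mod_cast hC.nonempty
  exact h (C.erase (C.max' hne))
    ⟨C, isCircuit_iff_isCircuit_coe.2 hC, _, C.max'_mem hne, C.le_max', rfl⟩
    ((C.erase_subset _).trans (by exact_mod_cast hCS))

section Whitney

variable [Fintype α] [LinearOrder α] {M : Matroid α}

lemma sum_neg_one_pow_card_filter_not_noBrokenCircuit (i : ℕ) :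
    ∑ S ∈ univ.filter (fun S ↦ mrank M S = i ∧ ¬ NoBrokenCircuit M S),
      (-1 : ℤ) ^ #S = 0 := by
  set s := univ.filter fun S : Finset α ↦ mrank M S = i ∧ ¬ NoBrokenCircuit M S
  have hne {S : Finset α} (hS : S ∈ s) : (brokenCircuitTops M S).Nonempty :=
    not_noBrokenCircuit_iff.1 (mem_filter.1 hS).2.2
  have hleast {S : Finset α} (hS : S ∈ s) :
      IsLeast ↑(brokenCircuitTops M (symmDiff S {(brokenCircuitTops M S).min' (hne hS)}))
        ((brokenCircuitTops M S).min' (hne hS)) :=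
    isLeast_brokenCircuitTops (isLeast_min' _ _) (erase_subset_symmDiff_singleton _ _)
      (symmDiff_singleton_subset_insert _ _)
  refine sum_involution (fun S hS ↦ symmDiff S {(brokenCircuitTops M S).min' (hne hS)})
    (fun S _ ↦ by rw [neg_one_pow_card_symmDiff_singleton, add_neg_cancel])
    (fun S _ _ ↦ by simp [symmDiff_eq_left]) (fun S hS ↦ ?_) (fun S hS ↦ ?_)
  · set u := (brokenCircuitTops M S).min' (hne hS)
    have hrank : mrank M (symmDiff S {u}) = mrank M S :=
      mrank_eq_of_mem_closure_erase (mem_closure_erase_of_mem_brokenCircuitTops (min'_mem _ _))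
        (erase_subset_symmDiff_singleton S u) (symmDiff_singleton_subset_insert S u)
    have hu := (hleast hS).1
    simp only [s, mem_filter, mem_univ, true_and, not_noBrokenCircuit_iff] at hS ⊢
    exact ⟨hrank.trans hS.1, ⟨u, hu⟩⟩
  · rw [← (hleast hS).unique (isLeast_min' _ _), symmDiff_symmDiff_cancel_right]

lemma filter_mrank_eq_and_noBrokenCircuit (hE : M.E = Set.univ) (i : ℕ) :
    univ.filter (fun S ↦ mrank M S = i ∧ NoBrokenCircuit M S) =
      univ.filter (fun S ↦ #S = i ∧ M.Indep ↑S ∧ NoBrokenCircuit M S) := by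
  ext S
  simp only [mem_filter, mem_univ, true_and]
  constructor
  · rintro ⟨hr, h⟩
    have hS := indep_of_noBrokenCircuit hE h
    exact ⟨(mrank_eq_card hS).symm.trans hr, hS, h⟩
  · rintro ⟨hc, hS, h⟩
    exact ⟨(mrank_eq_card hS).trans hc, h⟩

end Whitney

lemma coeff_matCharPoly [Fintype α] (M : Matroid α) {i : ℕ} (hi : i ≤ mrank M univ) :
    (matCharPoly M).coeff (mrank M univ - i) =
      ∑ S ∈ univ.filter (fun S ↦ mrank M S = i), (-1 : ℤ) ^ #S := by
  rw [matCharPoly, finsetSum_coeff, sum_filter]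
  refine sum_congr rfl fun S _ ↦ ?_
  have := mrank_le_mrank (M := M) (subset_univ S)
  rw [← C_1, ← C_neg, ← C_pow, coeff_C_mul_X_pow]
  congr 1
  apply propext
  omega

/-- Whitney's broken circuit theorem: for a matroid `M` with a linearly ordered ground
set, the number of independent sets of size `i` containing no broken circuit equals
`(−1)^i` times the coefficient of `t^{r(M)−i}` in the characteristic polynomial of `M`. -/
theorem nbc_count_eq_charPoly_coeff [Fintype α] [LinearOrder α]
    (M : Matroid α) (hE : M.E = Set.univ) (i : ℕ) (hi : i ≤ mrank M univ) :
    ((univ.filter fun S : Finset α =>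
        S.card = i ∧ M.Indep (S : Set α) ∧ NoBrokenCircuit M S).card : ℤ) =
      (-1 : ℤ) ^ i * (matCharPoly M).coeff (mrank M univ - i) := by
  set nbc := univ.filter fun S : Finset α => #S = i ∧ M.Indep ↑S ∧ NoBrokenCircuit M S
  have hsign : ∑ S ∈ nbc, (-1 : ℤ) ^ #S = (-1) ^ i * #nbc := by
    rw [sum_congr rfl fun S hS ↦ by rw [(mem_filter.1 hS).2.1], sum_const, nsmul_eq_mul, mul_comm]
  calc (#nbc : ℤ) = (-1) ^ i * ∑ S ∈ nbc, (-1 : ℤ) ^ #S := by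
        rw [hsign, ← mul_assoc, ← pow_add, Even.neg_one_pow ⟨i, rfl⟩, one_mul]
    _ = (-1) ^ i * ∑ S ∈ univ.filter (fun S ↦ mrank M S = i), (-1 : ℤ) ^ #S := by
        rw [← sum_filter_add_sum_filter_not (univ.filter fun S ↦ mrank M S = i)
            (NoBrokenCircuit M), filter_filter, filter_filter,
          sum_neg_one_pow_card_filter_not_noBrokenCircuit, add_zero,
          filter_mrank_eq_and_noBrokenCircuit hE]
    _ = (-1) ^ i * (matCharPoly M).coeff (mrank M univ - i) := by rw [coeff_matCharPoly M hi]
end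

section
/- Let A = {H₁,...,H_N} be a central hyperplane arrangement in C^r with linear forms h_i, let R₁,...,R_N be positive reals, and suppose S ⊆ A contains a broken circuit with respect to the order H₁ < ... < H_N, where the R_i grow fast enough that R_{i_k}·(sum of |c_j|) < R_i for every circuit relation h_i = Σ_j c_j h_{i_j} with all i_j < i. Then the stratum P_A^S = {x ∈ C^r : |h_i(x)| > R_i for H_i ∈ A\S, |h_i(x)| = R_i for H_i ∈ S} is empty. -/
open Finset

/-- Independence in the linear matroid of the forms `h`. -/
def LinIndep {N : ℕ} {V : Type*} [AddCommGroup V] [Module ℂ V]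
    (h : Fin N → V) (S : Finset (Fin N)) : Prop :=
  LinearIndependent ℂ (fun x : S => h x)

/-- A circuit of the linear matroid of `h`: a minimal dependent set. -/
def LinCircuit {N : ℕ} {V : Type*} [AddCommGroup V] [Module ℂ V]
    (h : Fin N → V) (C : Finset (Fin N)) : Prop :=
  ¬ LinIndep h C ∧ ∀ D : Finset (Fin N), D ⊂ C → LinIndep h D

/-! Let `m` be the largest element of a circuit `C` with `C \ {m} ⊆ S`. Solving the circuit
relation for `h m` gives `h m = ∑ c j • h j` over `C \ {m}` with all `c j ≠ 0`, so for `x` in the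
stratum `‖h m x‖ ≤ ∑ ‖c j‖ R j ≤ (∑ ‖c j‖) R (max (C \ {m})) < R m ≤ ‖h m x‖`. If `C = {m}`, the
relation reads `h m = 0`, which contradicts `R m > 0`. -/

section Circuit

variable {N : ℕ} {V : Type*} [AddCommGroup V] [Module ℂ V] {h : Fin N → V} {C : Finset (Fin N)}

theorem linIndep_iff_linearIndepOn (S : Finset (Fin N)) :
    LinIndep h S ↔ LinearIndepOn ℂ h (S : Set (Fin N)) :=
  Iff.rfl

/-- By minimality, a nontrivial relation on a circuit cannot be supported on a proper subset. -/
theorem LinCircuit.exists_sum_smul_eq_zero (hC : LinCircuit h C) :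
    ∃ a : Fin N → ℂ, (∀ j ∈ C, a j ≠ 0) ∧ ∑ j ∈ C, a j • h j = 0 := by
  obtain ⟨hdep, hmin⟩ := hC
  rw [linIndep_iff_linearIndepOn, linearDepOn_iff] at hdep
  obtain ⟨l, hlC, hl0, hl⟩ := hdep
  have hsub : l.support ⊆ C := by simpa [Finsupp.mem_supported] using hlC
  have hsupp : l.support = C := by
    by_contra hne
    have hind := hmin _ (Finset.ssubset_iff_subset_ne.2 ⟨hsub, hne⟩)
    rw [linIndep_iff_linearIndepOn, linearIndepOn_iff] at hind
    exact hl (hind l (by simp [Finsupp.mem_supported]) hl0)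
  exact ⟨l, fun j hj => Finsupp.mem_support_iff.1 (hsupp ▸ hj), hsupp ▸ hl0⟩

theorem LinCircuit.exists_eq_sum_smul_erase (hC : LinCircuit h C) {m : Fin N} (hm : m ∈ C) :
    ∃ c : Fin N → ℂ, (∀ j ∈ C.erase m, c j ≠ 0) ∧ h m = ∑ j ∈ C.erase m, c j • h j := by
  obtain ⟨a, ha, hsum⟩ := hC.exists_sum_smul_eq_zero
  have ham := ha m hm
  refine ⟨fun j => -(a m)⁻¹ * a j, fun j hj => ?_, ?_⟩
  · simpa [ham] using ha j (mem_of_mem_erase hj)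
  · rw [← add_sum_erase C _ hm, add_eq_zero_iff_eq_neg] at hsum
    rw [← inv_smul_smul₀ ham (h m), hsum, smul_neg, smul_sum, ← sum_neg_distrib]
    simp only [neg_mul, neg_smul, mul_smul]

end Circuit

theorem norm_apply_le_sum_of_eq_sum_smul {ι V : Type*} [AddCommGroup V] [Module ℂ V]
    {f : V →ₗ[ℂ] ℂ} {g : ι → V →ₗ[ℂ] ℂ} {T : Finset ι} {c : ι → ℂ}
    (hf : f = ∑ j ∈ T, c j • g j) (x : V) : ‖f x‖ ≤ ∑ j ∈ T, ‖c j‖ * ‖g j x‖ := by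
  subst hf
  simpa only [LinearMap.sum_apply, LinearMap.smul_apply, smul_eq_mul, norm_mul]
    using norm_sum_le T fun j => c j * g j x

theorem sum_mul_le_sum_mul_max' {ι : Type*} [LinearOrder ι] {R : ι → ℝ} (hR : Monotone R)
    {T : Finset ι} (hT : T.Nonempty) (w : ι → ℝ) (hw : ∀ j ∈ T, 0 ≤ w j) :
    ∑ j ∈ T, w j * R j ≤ (∑ j ∈ T, w j) * R (T.max' hT) := by
  rw [sum_mul]
  exact sum_le_sum fun j hj => mul_le_mul_of_nonneg_left (hR (T.le_max' j hj)) (hw j hj)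

/-- If the radii `R₁ ≪ ⋯ ≪ R_N` grow fast enough with respect to the circuit
relations of the arrangement of the forms `h₁,…,h_N` and `S` contains a broken
circuit (with respect to the order `H₁ < ⋯ < H_N`), then the stratum
`P_A^S = {x : |h_i(x)| > R_i for i ∉ S, |h_i(x)| = R_i for i ∈ S}` is empty. -/
theorem stratum_empty_of_brokenCircuit (N r : ℕ)
    (h : Fin N → ((Fin r → ℂ) →ₗ[ℂ] ℂ)) (R : Fin N → ℝ)
    (hpos : ∀ i, 0 < R i) (hmono : Monotone R)
    (hgrow : ∀ (i : Fin N) (T : Finset (Fin N)) (c : Fin N → ℂ) (hT : T.Nonempty),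
      (∀ j ∈ T, j < i) → (∀ j ∈ T, c j ≠ 0) → h i = ∑ j ∈ T, c j • h j →
        (∑ j ∈ T, ‖c j‖) * R (T.max' hT) < R i)
    (S : Finset (Fin N))
    (hbc : ∃ C : Finset (Fin N), LinCircuit h C ∧
      ∃ hC : C.Nonempty, C.erase (C.max' hC) ⊆ S) :
    ¬ ∃ x : Fin r → ℂ,
        (∀ i ∉ S, R i < ‖h i x‖) ∧ (∀ i ∈ S, ‖h i x‖ = R i) := by
  rintro ⟨x, hout, hin⟩
  obtain ⟨C, hC, hCne, hbroken⟩ := hbc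
  set m := C.max' hCne
  obtain ⟨c, hc0, hrel⟩ := hC.exists_eq_sum_smul_erase (C.max'_mem hCne)
  have hRm : R m ≤ ‖h m x‖ := by
    by_cases hmS : m ∈ S
    exacts [(hin m hmS).ge, (hout m hmS).le]
  have hbound : ‖h m x‖ ≤ ∑ j ∈ C.erase m, ‖c j‖ * R j :=
    (norm_apply_le_sum_of_eq_sum_smul hrel x).trans_eq
      (sum_congr rfl fun j hj => by rw [hin j (hbroken hj)])
  rcases (C.erase m).eq_empty_or_nonempty with hT | hT
  · rw [hT, sum_empty] at hbound
    linarith [hpos m]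
  · have hlt : ∀ j ∈ C.erase m, j < m := fun j hj => C.lt_max'_of_mem_erase_max' hCne hj
    linarith [hgrow m _ c hT hlt hc0 hrel,
      sum_mul_le_sum_mul_max' hmono hT (fun j => ‖c j‖) fun j _ => norm_nonneg (c j)]
end

section
/- Let A be a central hyperplane arrangement in C^r given by linear forms h_i with positive reals R_i. The map f(x) = max(1, max_i R_i/|h_i(x)|) · x is a deformation retraction from the complement C_A = C^r \ ∪H_i onto P_A = {x ∈ C^r : |h_i(x)| ≥ R_i for all i}; in particular it is continuous, restricts to the identity on P_A, and is homotopic to the identity of C_A. -/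
/-- The retraction map `f(x) = max(1, max_i R_i/|h_i(x)|) · x`. -/
noncomputable def retractMap (N r : ℕ) (h : Fin N → ((Fin r → ℂ) →ₗ[ℂ] ℂ))
    (R : Fin N → ℝ) (x : Fin r → ℂ) : Fin r → ℂ :=
  (max 1 (⨆ i, R i / ‖h i x‖)) • x

/-!
The scale factor `c x = max 1 (max_i R_i / ‖h_i x‖)` is continuous and at least `1` on the
complement `C_A`, and equals `1` on `P_A`. Since `‖h_i (c x • x)‖ = c x ‖h_i x‖ ≥ R_i`, rescaling
by `c` maps `C_A` into `P_A`. As `C_A` is a cone, the segment from `c x • x` to `x`, namely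
`((1 - t) c x + t) • x`, stays in `C_A`, which gives the homotopy to the identity.
-/

open Set

lemma ContinuousOn.ciSup_of_finite {X L ι : Type*} [TopologicalSpace X]
    [ConditionallyCompleteLattice L] [TopologicalSpace L] [ContinuousSup L] [Finite ι]
    {f : ι → X → L} {s : Set X} (hf : ∀ i, ContinuousOn (f i) s) :
    ContinuousOn (fun x => ⨆ i, f i x) s := by
  rcases isEmpty_or_nonempty ι with hι | hι
  · simpa only [iSup_of_empty'] using continuousOn_const
  · cases nonempty_fintype ι
    simp_rw [← Finset.sup'_univ_eq_ciSup]
    exact ContinuousOn.finset_sup'_apply Finset.univ_nonempty fun i _ => hf i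

section RescaleOnCone

variable {E : Type*} [AddCommGroup E] [Module ℝ E] [TopologicalSpace E] [ContinuousSMul ℝ E]
  {S : Set E} (hS : ∀ x ∈ S, ∀ t : ℝ, 0 < t → t • x ∈ S)
  {c : S → ℝ} (hc : Continuous c) (hc_pos : ∀ x, 0 < c x)

noncomputable def rescaleOnCone : C(S, S) where
  toFun x := ⟨c x • (x : E), hS x x.2 (c x) (hc_pos x)⟩
  continuous_toFun := (hc.smul continuous_subtype_val).subtype_mk _

noncomputable def rescaleOnConeHomotopy :
    (rescaleOnCone hS hc hc_pos).Homotopy (ContinuousMap.id S) where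
  toFun p := ⟨((1 - p.1) * c p.2 + p.1) • (p.2 : E), hS _ p.2.2 _ (by
    simpa using convex_Ioi (0 : ℝ) (mem_Ioi.2 (hc_pos p.2)) (mem_Ioi.2 one_pos)
      (sub_nonneg.2 p.1.2.2) p.1.2.1 (sub_add_cancel 1 _))⟩
  continuous_toFun := by fun_prop
  map_zero_left x := by ext1; simp [rescaleOnCone]
  map_one_left x := by ext1; simp

theorem rescaleOnCone_homotopic_id :
    (rescaleOnCone hS hc hc_pos).Homotopic (ContinuousMap.id S) :=
  ⟨rescaleOnConeHomotopy hS hc hc_pos⟩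

end RescaleOnCone

section RetractScale

variable {ι E : Type*} [AddCommGroup E] [Module ℂ E]
  (h : ι → E →ₗ[ℂ] ℂ) (R : ι → ℝ)

/-- `retractMap N r h R x` unfolds to `retractScale h R x • x`. -/
noncomputable def retractScale (x : E) : ℝ := max 1 (⨆ i, R i / ‖h i x‖)

lemma one_le_retractScale (x : E) : 1 ≤ retractScale h R x := le_max_left _ _

lemma retractScale_eq_one {x : E} (hx : ∀ i, R i ≤ ‖h i x‖) : retractScale h R x = 1 := by
  refine max_eq_left (Real.iSup_le (fun i => ?_) zero_le_one)
  exact div_le_one_of_le₀ (hx i) (norm_nonneg _)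

variable [Finite ι]

lemma div_norm_le_retractScale (x : E) (i : ι) : R i / ‖h i x‖ ≤ retractScale h R x :=
  (le_ciSup (f := fun i => R i / ‖h i x‖) (finite_range _).bddAbove i).trans (le_max_right _ _)

lemma continuousOn_retractScale [TopologicalSpace E] (hh : ∀ i, Continuous (h i)) :
    ContinuousOn (retractScale h R) {x | ∀ i, h i x ≠ 0} := by
  refine continuousOn_const.sup (ContinuousOn.ciSup_of_finite fun i => ?_)
  refine continuousOn_const.div (hh i).norm.continuousOn ?_
  exact fun x hx => norm_ne_zero_iff.mpr (hx i)

lemma le_norm_apply_retractScale_smul {x : E} (hx : ∀ i, h i x ≠ 0) (i : ι) :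
    R i ≤ ‖h i (retractScale h R x • x)‖ := by
  have hnorm : 0 < ‖h i x‖ := norm_pos_iff.mpr (hx i)
  rw [LinearMap.map_smul_of_tower, norm_smul, Real.norm_of_nonneg (zero_le_one.trans
    (one_le_retractScale h R x)), ← div_le_iff₀ hnorm]
  exact div_norm_le_retractScale h R x i

end RetractScale

theorem retractMap_deformation_retraction_general (N r : ℕ)
    (h : Fin N → ((Fin r → ℂ) →ₗ[ℂ] ℂ)) (R : Fin N → ℝ)
    (CA PA : Set (Fin r → ℂ))
    (hCA : CA = {x | ∀ i, h i x ≠ 0})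
    (hPA : PA = {x | ∀ i, R i ≤ ‖h i x‖}) :
    ContinuousOn (retractMap N r h R) CA ∧
    Set.MapsTo (retractMap N r h R) CA PA ∧
    Set.EqOn (retractMap N r h R) id PA ∧
    ∃ g : C(CA, CA), (∀ x : CA, (g x : Fin r → ℂ) = retractMap N r h R x) ∧
      Nonempty (g.Homotopy (ContinuousMap.id CA)) := by
  subst hCA hPA
  have hcont := continuousOn_retractScale h R fun i => (h i).continuous_of_finiteDimensional
  have hcone : ∀ x ∈ {x | ∀ i, h i x ≠ 0}, ∀ t : ℝ, 0 < t → t • x ∈ {x | ∀ i, h i x ≠ 0} := by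
    intro x hx t ht i
    rw [LinearMap.map_smul_of_tower]
    exact smul_ne_zero ht.ne' (hx i)
  have hpos (x : {x | ∀ i, h i x ≠ 0}) : 0 < retractScale h R x :=
    one_pos.trans_le (one_le_retractScale h R x)
  refine ⟨hcont.smul continuousOn_id, fun x hx => le_norm_apply_retractScale_smul h R hx,
    fun x hx => ?_, rescaleOnCone hcone hcont.domRestrict hpos, fun _ => rfl,
    rescaleOnCone_homotopic_id hcone hcont.domRestrict hpos⟩
  show retractScale h R x • x = x
  rw [retractScale_eq_one h R hx, one_smul]

/-- The map `f(x) = max(1, max_i R_i/|h_i(x)|) · x` is a deformation retraction from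
the complement `C_A = ℂ^r \ ∪ H_i` of a central arrangement onto the space of branched
polymers `P_A = {x : |h_i(x)| ≥ R_i for all i}`: it is continuous on `C_A`, maps `C_A`
into `P_A`, restricts to the identity on `P_A`, and is homotopic to the identity of
`C_A`. -/
theorem retractMap_deformation_retraction (N r : ℕ)
    (h : Fin N → ((Fin r → ℂ) →ₗ[ℂ] ℂ)) (R : Fin N → ℝ) (hpos : ∀ i, 0 < R i)
    (CA PA : Set (Fin r → ℂ))
    (hCA : CA = {x | ∀ i, h i x ≠ 0})
    (hPA : PA = {x | ∀ i, R i ≤ ‖h i x‖}) :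
    ContinuousOn (retractMap N r h R) CA ∧
    Set.MapsTo (retractMap N r h R) CA PA ∧
    Set.EqOn (retractMap N r h R) id PA ∧
    ∃ g : C(CA, CA), (∀ x : CA, (g x : Fin r → ℂ) = retractMap N r h R x) ∧
      Nonempty (g.Homotopy (ContinuousMap.id CA)) :=
  retractMap_deformation_retraction_general N r h R CA PA hCA hPA
end

section
/- The spaces P_A and C_A are homotopy equivalent, where C_A is the complement of a central hyperplane arrangement A in C^r and P_A is the set of points at |h_i|-distance at least R_i from each hyperplane; in particular H*(P_A, Z) ≅ H*(C_A, Z). -/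
/-!
`P_A` is a deformation retract of `C_A`. The set `C_A` is stable under dilations `x ↦ t • x` by
real factors `t ≥ 1`, and the continuous factor `s(x) = 1 + ∑ᵢ max 0 (Rᵢ / ‖hᵢ x‖ - 1) ≥ 1`
on `C_A` satisfies `s(x) ‖hᵢ x‖ ≥ Rᵢ`, with `s = 1` on `P_A`. So `x ↦ s(x) • x` retracts `C_A`
onto `P_A`, and dilating by the factors `(1 - t) s(x) + t` is a homotopy in `C_A` from this
retraction to the identity.
-/

open Set

section Dilation

variable {E : Type*} [AddCommGroup E] [Module ℝ E] [TopologicalSpace E] [ContinuousSMul ℝ E]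
  {P C : Set E} {s : E → ℝ}

theorem nonempty_homotopyEquiv_of_dilation (hPC : P ⊆ C)
    (hC : ∀ x ∈ C, ∀ t : ℝ, 1 ≤ t → t • x ∈ C) (hs : ContinuousOn s C)
    (hs_one_le : ∀ x ∈ C, 1 ≤ s x) (hs_mem : ∀ x ∈ C, s x • x ∈ P)
    (hs_eq_one : ∀ x ∈ P, s x = 1) :
    Nonempty (ContinuousMap.HomotopyEquiv P C) := by
  have hs' : Continuous fun x : C => s x := hs.domRestrict
  let retraction : C(C, P) :=
    ⟨fun x => ⟨s x • (x : E), hs_mem x x.2⟩, (hs'.smul continuous_subtype_val).subtype_mk _⟩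
  let factor (t : unitInterval) (x : C) : ℝ := (1 - (t : ℝ)) * s x + t
  have one_le_factor (t : unitInterval) (x : C) : 1 ≤ factor t x := by
    nlinarith [hs_one_le x x.2, t.2.1, t.2.2]
  refine ⟨⟨⟨inclusion hPC, continuous_inclusion hPC⟩, retraction, ?_, ?_⟩⟩
  · convert ContinuousMap.Homotopic.refl (ContinuousMap.id P)
    ext x
    simp [retraction, hs_eq_one x x.2]
  · refine ⟨⟨⟨fun p => ⟨factor p.1 p.2 • (p.2 : E), hC _ p.2.2 _ (one_le_factor p.1 p.2)⟩, ?_⟩,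
      fun x => ?_, fun x => ?_⟩⟩
    · have : Continuous fun p : unitInterval × C => factor p.1 p.2 :=
        ((continuous_const.sub (continuous_subtype_val.comp continuous_fst)).mul
          (hs'.comp continuous_snd)).add (continuous_subtype_val.comp continuous_fst)
      exact (this.smul (continuous_subtype_val.comp continuous_snd)).subtype_mk _
    · simp [factor, retraction]
    · simp [factor]

end Dilation

section Arrangement

variable {ι E : Type*} [AddCommGroup E] [Module ℂ E]

def arrangementComplement (h : ι → E →ₗ[ℂ] ℂ) : Set E := {x | ∀ i, h i x ≠ 0}

def polymerSpace (h : ι → E →ₗ[ℂ] ℂ) (R : ι → ℝ) : Set E := {x | ∀ i, R i ≤ ‖h i x‖}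

variable {h : ι → E →ₗ[ℂ] ℂ} {R : ι → ℝ}

theorem polymerSpace_subset_arrangementComplement (hR : ∀ i, 0 < R i) :
    polymerSpace h R ⊆ arrangementComplement h := fun x hx i hi => by
  simpa [hi] using (hR i).trans_le (hx i)

theorem smul_mem_arrangementComplement {x : E} (hx : x ∈ arrangementComplement h) {t : ℝ}
    (ht : t ≠ 0) : t • x ∈ arrangementComplement h := fun i => by
  simpa [LinearMap.map_smul_of_tower, ht] using hx i

variable [Fintype ι]

noncomputable def polymerDilation (h : ι → E →ₗ[ℂ] ℂ) (R : ι → ℝ) (x : E) : ℝ :=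
  1 + ∑ i, max 0 (R i / ‖h i x‖ - 1)

theorem one_le_polymerDilation (x : E) : 1 ≤ polymerDilation h R x :=
  le_add_of_nonneg_right (Finset.sum_nonneg fun _ _ => le_max_left _ _)

theorem polymerDilation_eq_one {x : E} (hx : x ∈ polymerSpace h R) :
    polymerDilation h R x = 1 := by
  have (i : ι) : max 0 (R i / ‖h i x‖ - 1) = 0 :=
    max_eq_left (sub_nonpos.2 (div_le_one_of_le₀ (hx i) (norm_nonneg _)))
  simp [polymerDilation, this]

theorem le_polymerDilation_mul_norm {x : E} (hx : x ∈ arrangementComplement h) (i : ι) :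
    R i ≤ polymerDilation h R x * ‖h i x‖ := by
  have hpos : 0 < ‖h i x‖ := norm_pos_iff.2 (hx i)
  have : R i / ‖h i x‖ ≤ polymerDilation h R x := calc
    R i / ‖h i x‖ ≤ 1 + max 0 (R i / ‖h i x‖ - 1) := by
        linarith [le_max_right 0 (R i / ‖h i x‖ - 1)]
    _ ≤ polymerDilation h R x := add_le_add_right (Finset.single_le_sum
        (f := fun j => max 0 (R j / ‖h j x‖ - 1)) (fun _ _ => le_max_left _ _)
        (Finset.mem_univ i)) 1
  rwa [div_le_iff₀ hpos] at this

theorem polymerDilation_smul_mem_polymerSpace {x : E} (hx : x ∈ arrangementComplement h) :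
    polymerDilation h R x • x ∈ polymerSpace h R := fun i => by
  rw [LinearMap.map_smul_of_tower, norm_smul,
    Real.norm_of_nonneg (zero_le_one.trans (one_le_polymerDilation x))]
  exact le_polymerDilation_mul_norm hx i

theorem continuousOn_polymerDilation [TopologicalSpace E] (hc : ∀ i, Continuous (h i)) :
    ContinuousOn (polymerDilation h R) (arrangementComplement h) :=
  continuousOn_const.add <| continuousOn_finsetSum _ fun i _ =>
    ContinuousOn.sup continuousOn_const <| (continuousOn_const.div (hc i).norm.continuousOn
      fun x (hx : ∀ i, h i x ≠ 0) => norm_ne_zero_iff.2 (hx i)).sub continuousOn_const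

end Arrangement

theorem polymers_homotopyEquiv_complement_general (N r : ℕ)
    (h : Fin N → ((Fin r → ℂ) →ₗ[ℂ] ℂ))
    (R : Fin N → ℝ) (hpos : ∀ i, 0 < R i)
    (CA PA : Set (Fin r → ℂ))
    (hCA : CA = {x | ∀ i, h i x ≠ 0})
    (hPA : PA = {x | ∀ i, R i ≤ ‖h i x‖}) :
    Nonempty (ContinuousMap.HomotopyEquiv PA CA) := by
  subst hCA hPA
  exact nonempty_homotopyEquiv_of_dilation (polymerSpace_subset_arrangementComplement hpos)
    (fun _ hx _ ht => smul_mem_arrangementComplement hx (zero_lt_one.trans_le ht).ne')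
    (continuousOn_polymerDilation fun i => (h i).continuous_of_finiteDimensional)
    (fun x _ => one_le_polymerDilation x)
    (fun _ hx => polymerDilation_smul_mem_polymerSpace hx)
    (fun _ hx => polymerDilation_eq_one hx)

/-- The space of branched polymers `P_A` of a central hyperplane arrangement
`A = {ker h₁, …, ker h_N}` in `ℂ^r` is homotopy equivalent to the complement
`C_A = ℂ^r \ ∪ H_i`; in particular `H^*(P_A, ℤ) ≅ H^*(C_A, ℤ)`. -/
theorem polymers_homotopyEquiv_complement (N r : ℕ)
    (h : Fin N → ((Fin r → ℂ) →ₗ[ℂ] ℂ)) (hne : ∀ i, h i ≠ 0)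
    (R : Fin N → ℝ) (hpos : ∀ i, 0 < R i)
    (CA PA : Set (Fin r → ℂ))
    (hCA : CA = {x | ∀ i, h i x ≠ 0})
    (hPA : PA = {x | ∀ i, R i ≤ ‖h i x‖}) :
    Nonempty (ContinuousMap.HomotopyEquiv PA CA) :=
  polymers_homotopyEquiv_complement_general N r h R hpos CA PA hCA hPA
end

section
/- For any matroid M on ground set E, Σ_{i=0}^{r(M)} nbc_i(M) q^{r(M)−i} = (−1)^{r(M)} χ_M(−q), where nbc_i(M) is the number of i-subsets of E containing no broken circuit. -/
open scoped Classical
open Polynomial Finset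

variable {α : Type*}

set_option maxHeartbeats 1000000

section helpers

variable {M : Matroid α}

lemma card_le_mrank {T S : Finset α} (hTS : T ⊆ S) (hT : M.Indep ↑T) :
    T.card ≤ mrank M S :=
  Finset.le_sup (by simp [Finset.mem_filter, Finset.mem_powerset, hTS, hT])

lemma exists_mrank_witness (S : Finset α) :
    ∃ T ⊆ S, M.Indep ↑T ∧ T.card = mrank M S := by
  have hne : (S.powerset.filter fun T : Finset α => M.Indep (T : Set α)).Nonempty :=
    ⟨∅, by simp [M.empty_indep]⟩
  obtain ⟨T, hT, hval⟩ := Finset.exists_mem_eq_sup _ hne Finset.card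
  simp only [Finset.mem_filter, Finset.mem_powerset] at hT
  exact ⟨T, hT.1, hT.2, hval.symm⟩

lemma mrank_indep_eq {S : Finset α} (hS : M.Indep ↑S) : mrank M S = S.card := by
  refine le_antisymm (Finset.sup_le fun T hT => ?_) (card_le_mrank Finset.Subset.rfl hS)
  simp only [Finset.mem_filter, Finset.mem_powerset] at hT
  exact Finset.card_le_card hT.1

lemma mrank_le_of_subset_closure {S S' : Finset α}
    (hE : M.E = Set.univ) (h : (↑S : Set α) ⊆ M.closure ↑S') :
    mrank M S ≤ mrank M S' := by
  obtain ⟨T, hTS, hT, hcard⟩ := exists_mrank_witness (M := M) S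
  obtain ⟨I, hI⟩ := M.exists_isBasis ↑S' (by rw [hE]; exact Set.subset_univ _)
  have hTcl : (↑T : Set α) ⊆ M.closure ↑S' :=
    (Finset.coe_subset.mpr hTS).trans h
  obtain ⟨J, hJ, hTJ⟩ := hT.subset_isBasis_of_subset hTcl (M.closure_subset_ground _)
  have hIJ : J.encard = I.encard :=
    hJ.encard_eq_encard hI.isBasis_closure_right
  have hIfin : I.Finite := (S'.finite_toSet).subset hI.subset
  have hIsub : hIfin.toFinset ⊆ S' := by
    intro x hx
    simpa using hI.subset (hIfin.mem_toFinset.mp hx)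
  have hIind : M.Indep ↑hIfin.toFinset := by rw [hIfin.coe_toFinset]; exact hI.indep
  have h1 : T.card ≤ hIfin.toFinset.card := by
    have : (↑T : Set α).encard ≤ I.encard := le_of_le_of_eq (Set.encard_mono hTJ) hIJ
    rwa [Set.encard_coe_eq_coe_finsetCard, hIfin.encard_eq_coe_toFinset_card,
      Nat.cast_le] at this
  exact hcard ▸ h1.trans (card_le_mrank hIsub hIind)

lemma mrank_congr_closure {S S' : Finset α}
    (hE : M.E = Set.univ) (h : M.closure ↑S = M.closure ↑S') :
    mrank M S = mrank M S' := by
  have hsub : ∀ X : Finset α, (↑X : Set α) ⊆ M.closure ↑X := fun X =>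
    M.subset_closure _ (by rw [hE]; exact Set.subset_univ _)
  exact le_antisymm (mrank_le_of_subset_closure hE (h ▸ hsub S))
    (mrank_le_of_subset_closure hE (h ▸ hsub S'))

lemma exists_circuit_subset (hE : M.E = Set.univ) :
    ∀ S : Finset α, ¬ M.Indep ↑S → ∃ C ⊆ S, IsCircuit M C := by
  intro S
  induction S using Finset.strongInduction with
  | _ S ih =>
    intro hS
    by_cases h : ∀ D : Finset α, D ⊂ S → M.Indep (D : Set α)
    · exact ⟨S, Finset.Subset.rfl, ⟨Matroid.dep_iff.mpr ⟨hS, by rw [hE]; exact Set.subset_univ _⟩, h⟩⟩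
    · push_neg at h
      obtain ⟨D, hDS, hD⟩ := h
      obtain ⟨C, hCD, hC⟩ := ih D hDS hD
      exact ⟨C, hCD.trans hDS.subset, hC⟩

lemma circuit_mem_closure_erase [LinearOrder α] (hE : M.E = Set.univ) {C : Finset α} {u : α}
    (hC : IsCircuit M C) (hu : u ∈ C) : u ∈ M.closure ↑(C.erase u) := by
  by_contra h
  have hind : M.Indep ↑(C.erase u) := hC.2 _ (Finset.erase_ssubset hu)
  have h2 : M.Indep (insert u ↑(C.erase u)) := by
    rw [hind.insert_indep_iff_of_notMem (by simp)]
    exact ⟨by rw [hE]; trivial, h⟩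
  rw [← Finset.coe_insert, Finset.insert_erase hu] at h2
  exact hC.1.not_indep h2

/-- "S has a broken-circuit witness at u". -/
def brokenAt [LinearOrder α] (M : Matroid α) (S : Finset α) (u : α) : Prop :=
  u ∈ M.closure ↑(S.filter (· < u))

lemma brokenAt_of_not_nbc [LinearOrder α] {S : Finset α}
    (hE : M.E = Set.univ) (h : ¬ NoBrokenCircuit M S) : ∃ u, brokenAt M S u := by
  simp only [NoBrokenCircuit, not_forall, not_not] at h
  obtain ⟨B, ⟨C, hC, u, huC, hmax, rfl⟩, hBS⟩ := h
  refine ⟨u, ?_⟩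
  have h1 : u ∈ M.closure ↑(C.erase u) := circuit_mem_closure_erase hE hC huC
  have h2 : C.erase u ⊆ S.filter (· < u) := by
    intro b hb
    rw [Finset.mem_erase] at hb
    exact Finset.mem_filter.mpr ⟨hBS (Finset.mem_erase.mpr hb),
      lt_of_le_of_ne (hmax b hb.2) hb.1⟩
  exact M.closure_subset_closure (Finset.coe_subset.mpr h2) h1

lemma not_nbc_of_brokenAt [LinearOrder α] {S : Finset α} {u : α}
    (hE : M.E = Set.univ) (h : brokenAt M S u) : ¬ NoBrokenCircuit M S := by
  set S₁ := S.filter (· < u) with hS₁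
  obtain ⟨I, hI⟩ := M.exists_isBasis ↑S₁ (by rw [hE]; exact Set.subset_univ _)
  have hIfin : I.Finite := (S₁.finite_toSet).subset hI.subset
  set I' : Finset α := hIfin.toFinset with hI'
  have hI'coe : (↑I' : Set α) = I := hIfin.coe_toFinset
  have hI'S₁ : I' ⊆ S₁ := by
    intro x hx; simpa using hI.subset (hIfin.mem_toFinset.mp hx)
  have huI : u ∉ I := fun hmem => by
    have := hI.subset hmem
    simp only [hS₁, Finset.coe_filter, Set.mem_setOf_eq] at this
    exact lt_irrefl u this.2
  have hucl : u ∈ M.closure I := by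
    rwa [hI.closure_eq_closure]
  have hdep : M.Dep (insert u I) := hI.indep.insert_dep_iff.mpr ⟨hucl, huI⟩
  have hdep' : ¬ M.Indep ↑(insert u I') := by
    rw [Finset.coe_insert, hI'coe]; exact hdep.not_indep
  obtain ⟨C, hCsub, hC⟩ := exists_circuit_subset hE _ hdep'
  have huC : u ∈ C := by
    by_contra huC
    refine hC.1.not_indep (hI.indep.subset ?_)
    intro x hx
    rcases Finset.mem_insert.mp (hCsub hx) with rfl | hx'
    · exact absurd hx huC
    · rw [← hI'coe]; exact_mod_cast hx'
  have hmax : ∀ v ∈ C, v ≤ u := by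
    intro v hv
    rcases Finset.mem_insert.mp (hCsub hv) with rfl | hv'
    · exact le_refl v
    · exact le_of_lt (Finset.mem_filter.mp (hI'S₁ hv')).2
  intro hnbc
  refine hnbc (C.erase u) ⟨C, hC, u, huC, hmax, rfl⟩ ?_
  intro b hb
  rw [Finset.mem_erase] at hb
  rcases Finset.mem_insert.mp (hCsub hb.2) with rfl | hb'
  · exact absurd rfl hb.1
  · exact Finset.mem_filter.mp (hI'S₁ hb') |>.1

lemma nbc_iff_no_brokenAt [LinearOrder α] {S : Finset α} (hE : M.E = Set.univ) :
    NoBrokenCircuit M S ↔ ∀ u, ¬ brokenAt M S u := by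
  constructor
  · intro h u hu
    exact not_nbc_of_brokenAt hE hu h
  · intro h
    by_contra hn
    obtain ⟨u, hu⟩ := brokenAt_of_not_nbc hE hn
    exact h u hu

lemma indep_of_nbc [LinearOrder α] {S : Finset α} (hE : M.E = Set.univ)
    (h : NoBrokenCircuit M S) : M.Indep ↑S := by
  by_contra hS
  obtain ⟨C, hCS, hC⟩ := exists_circuit_subset hE S hS
  have hne : C.Nonempty := by
    rcases Finset.eq_empty_or_nonempty C with rfl | hne
    · exact absurd (by simp : M.Indep (↑(∅ : Finset α))) hC.1.not_indep
    · exact hne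
  exact h (C.erase (C.max' hne)) ⟨C, hC, C.max' hne, C.max'_mem hne,
    fun v hv => C.le_max' v hv, rfl⟩ (fun b hb => hCS (Finset.mem_erase.mp hb).2)

end helpers

section invol
variable [LinearOrder α] {M : Matroid α}

/-- Flip membership of `u` in `S`. -/
def flipAt (S : Finset α) (u : α) : Finset α :=
  if u ∈ S then S.erase u else insert u S

lemma flipAt_flipAt (S : Finset α) (u : α) : flipAt (flipAt S u) u = S := by
  by_cases hu : u ∈ S
  · have h1 : flipAt S u = S.erase u := if_pos hu
    rw [h1, flipAt, if_neg (Finset.notMem_erase u S), Finset.insert_erase hu]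
  · have h1 : flipAt S u = insert u S := if_neg hu
    rw [h1, flipAt, if_pos (Finset.mem_insert_self u S), Finset.erase_insert hu]

lemma flipAt_ne (S : Finset α) (u : α) : flipAt S u ≠ S := by
  by_cases hu : u ∈ S
  · rw [flipAt, if_pos hu]
    intro h
    exact Finset.notMem_erase u S (h.symm ▸ hu)
  · rw [flipAt, if_neg hu]
    intro h
    exact hu (h ▸ Finset.mem_insert_self u S)

lemma neg_one_pow_flipAt (S : Finset α) (u : α) :
    ((-1 : Polynomial ℤ)) ^ (flipAt S u).card = -(-1 : Polynomial ℤ) ^ S.card := by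
  by_cases hu : u ∈ S
  · rw [flipAt, if_pos hu, Finset.card_erase_of_mem hu]
    have h1 : S.card - 1 + 1 = S.card := Nat.succ_pred_eq_of_pos (Finset.card_pos.mpr ⟨u, hu⟩)
    calc (-1 : Polynomial ℤ) ^ (S.card - 1)
        = -((-1 : Polynomial ℤ) ^ (S.card - 1) * (-1)) := by ring
      _ = -(-1 : Polynomial ℤ) ^ (S.card - 1 + 1) := by rw [pow_succ]
      _ = -(-1 : Polynomial ℤ) ^ S.card := by rw [h1]
  · rw [flipAt, if_neg hu, Finset.card_insert_of_notMem hu, pow_succ]; ring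

lemma closure_filter_flipAt {S : Finset α} {u : α} (h : brokenAt M S u) (v : α) :
    M.closure ↑((flipAt S u).filter (· < v)) = M.closure ↑(S.filter (· < v)) := by
  rcases le_or_gt v u with hvu | huv
  · have hfe : (flipAt S u).filter (· < v) = S.filter (· < v) := by
      have hx : ∀ x : α, x < v → x ≠ u := fun x hxv => ne_of_lt (lt_of_lt_of_le hxv hvu)
      ext x
      simp only [flipAt, Finset.mem_filter]
      split_ifs with hu
      · simp only [Finset.mem_erase]
        exact ⟨fun ⟨⟨_, h1⟩, h2⟩ => ⟨h1, h2⟩, fun ⟨h1, h2⟩ => ⟨⟨hx x h2, h1⟩, h2⟩⟩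
      · simp only [Finset.mem_insert]
        constructor
        · rintro ⟨rfl | h1, h2⟩
          · exact absurd rfl (hx _ h2)
          · exact ⟨h1, h2⟩
        · rintro ⟨h1, h2⟩; exact ⟨Or.inr h1, h2⟩
    rw [hfe]
  · have hsub : S.filter (· < u) ⊆ (S.filter (· < v)).erase u := by
      intro x hx
      obtain ⟨h1, h2⟩ := Finset.mem_filter.mp hx
      exact Finset.mem_erase.mpr ⟨ne_of_lt h2, Finset.mem_filter.mpr ⟨h1, lt_trans h2 huv⟩⟩
    have hcl : u ∈ M.closure ↑((S.filter (· < v)).erase u) :=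
      M.closure_subset_closure (Finset.coe_subset.mpr hsub) h
    by_cases hu : u ∈ S
    · have he : (flipAt S u).filter (· < v) = (S.filter (· < v)).erase u := by
        rw [flipAt, if_pos hu]
        ext x
        simp only [Finset.mem_filter, Finset.mem_erase]
        tauto
      have hmem : u ∈ S.filter (· < v) := Finset.mem_filter.mpr ⟨hu, huv⟩
      rw [he]
      conv_rhs => rw [← Finset.insert_erase hmem]
      rw [Finset.coe_insert, M.closure_insert_eq_of_mem_closure hcl]
    · have he : (flipAt S u).filter (· < v) = insert u (S.filter (· < v)) := by
        rw [flipAt, if_neg hu]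
        ext x
        simp only [Finset.mem_filter, Finset.mem_insert]
        constructor
        · rintro ⟨rfl | h1, h2⟩
          · exact Or.inl rfl
          · exact Or.inr ⟨h1, h2⟩
        · rintro (rfl | ⟨h1, h2⟩)
          · exact ⟨Or.inl rfl, huv⟩
          · exact ⟨Or.inr h1, h2⟩
      rw [Finset.erase_eq_of_notMem (fun hmem => hu (Finset.mem_filter.mp hmem).1)] at hcl
      rw [he, Finset.coe_insert, M.closure_insert_eq_of_mem_closure hcl]

lemma brokenAt_flipAt_iff {S : Finset α} {u : α} (h : brokenAt M S u) (v : α) :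
    brokenAt M (flipAt S u) v ↔ brokenAt M S v := by
  unfold brokenAt
  rw [closure_filter_flipAt h v]

lemma closure_flipAt {S : Finset α} {u : α} (h : brokenAt M S u) :
    M.closure ↑(flipAt S u) = M.closure ↑S := by
  have hsub : S.filter (· < u) ⊆ S.erase u := by
    intro x hx
    obtain ⟨h1, h2⟩ := Finset.mem_filter.mp hx
    exact Finset.mem_erase.mpr ⟨ne_of_lt h2, h1⟩
  have hcl : u ∈ M.closure ↑(S.erase u) :=
    M.closure_subset_closure (Finset.coe_subset.mpr hsub) h
  by_cases hu : u ∈ S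
  · rw [flipAt, if_pos hu]
    conv_rhs => rw [← Finset.insert_erase hu]
    rw [Finset.coe_insert, M.closure_insert_eq_of_mem_closure hcl]
  · rw [Finset.erase_eq_of_notMem hu] at hcl
    rw [flipAt, if_neg hu, Finset.coe_insert, M.closure_insert_eq_of_mem_closure hcl]

lemma max'_congr' {A B : Finset α} (h : A = B) (hA : A.Nonempty) :
    A.max' hA = B.max' (h ▸ hA) := by subst h; rfl

end invol

section pv
variable [Fintype α] [LinearOrder α]

lemma pivotSet_nonempty (hE : M.E = Set.univ) {S : Finset α} (h : ¬ NoBrokenCircuit M S) :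
    (univ.filter fun u => brokenAt M S u).Nonempty := by
  obtain ⟨u, hu⟩ := brokenAt_of_not_nbc hE h
  exact ⟨u, Finset.mem_filter.mpr ⟨Finset.mem_univ u, hu⟩⟩

end pv

/-- The no-broken-circuit generating function of a matroid:
`Σ_{i=0}^{r(M)} nbc_i(M) q^{r(M)−i} = (−1)^{r(M)} χ_M(−q)`, where `nbc_i(M)` is the
number of `i`-subsets of the ground set containing no broken circuit. -/
theorem nbc_genFun_eq_charPoly [Fintype α] [LinearOrder α]
    (M : Matroid α) (hE : M.E = Set.univ) :
    ∑ i ∈ range (mrank M univ + 1),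
        Polynomial.C (((univ.filter fun S : Finset α =>
            S.card = i ∧ NoBrokenCircuit M S).card : ℤ)) * X ^ (mrank M univ - i) =
      (-1 : ℤ[X]) ^ (mrank M univ) * (matCharPoly M).comp (-X) := by
  set r := mrank M univ with hr
  have hRHS : (-1 : ℤ[X]) ^ r * (matCharPoly M).comp (-X) =
      ∑ S : Finset α, (-1 : ℤ[X]) ^ (r + S.card + (r - mrank M S)) * X ^ (r - mrank M S) := by
    rw [matCharPoly, Polynomial.sum_comp, Finset.mul_sum]
    refine Finset.sum_congr rfl fun S _ => ?_
    rw [Polynomial.mul_comp, Polynomial.pow_comp, Polynomial.pow_comp, Polynomial.neg_comp,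
      Polynomial.one_comp, Polynomial.X_comp, neg_pow (X : ℤ[X]), pow_add, pow_add]
    ring
  rw [hRHS, ← Finset.sum_filter_add_sum_filter_not Finset.univ (fun S => NoBrokenCircuit M S)]
  have hcancel : ∑ S ∈ univ.filter (fun S : Finset α => ¬ NoBrokenCircuit M S),
      (-1 : ℤ[X]) ^ (r + S.card + (r - mrank M S)) * X ^ (r - mrank M S) = 0 := by
    refine Finset.sum_involution
      (fun S hS => flipAt S ((univ.filter fun u => brokenAt M S u).max'
        (pivotSet_nonempty hE (Finset.mem_filter.mp hS).2)))
      (fun S hS => ?_) (fun S hS _ => flipAt_ne S _) (fun S hS => ?_) (fun S hS => ?_)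
    · -- cancellation
      set u := (univ.filter fun u => brokenAt M S u).max'
        (pivotSet_nonempty hE (Finset.mem_filter.mp hS).2) with hu_def
      have hu : brokenAt M S u :=
        (Finset.mem_filter.mp ((univ.filter fun u => brokenAt M S u).max'_mem _)).2
      have hmr : mrank M (flipAt S u) = mrank M S :=
        mrank_congr_closure hE (closure_flipAt hu)
      rw [hmr, pow_add, pow_add, pow_add, pow_add, neg_one_pow_flipAt S u]
      ring
    · -- membership
      set u := (univ.filter fun u => brokenAt M S u).max'
        (pivotSet_nonempty hE (Finset.mem_filter.mp hS).2) with hu_def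
      have hu : brokenAt M S u :=
        (Finset.mem_filter.mp ((univ.filter fun u => brokenAt M S u).max'_mem _)).2
      exact Finset.mem_filter.mpr ⟨Finset.mem_univ _,
        not_nbc_of_brokenAt hE ((brokenAt_flipAt_iff hu u).mpr hu)⟩
    · -- involution
      set u := (univ.filter fun u => brokenAt M S u).max'
        (pivotSet_nonempty hE (Finset.mem_filter.mp hS).2) with hu_def
      have hu : brokenAt M S u :=
        (Finset.mem_filter.mp ((univ.filter fun u => brokenAt M S u).max'_mem _)).2
      have hset : (univ.filter fun v => brokenAt M (flipAt S u) v)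
          = univ.filter fun v => brokenAt M S v := by
        ext v
        simp only [Finset.mem_filter, Finset.mem_univ, true_and]
        exact brokenAt_flipAt_iff hu v
      have hmax : (univ.filter fun v => brokenAt M (flipAt S u) v).max'
          (pivotSet_nonempty hE (Finset.mem_filter.mp (by
            exact Finset.mem_filter.mpr ⟨Finset.mem_univ _,
              not_nbc_of_brokenAt hE ((brokenAt_flipAt_iff hu u).mpr hu)⟩)).2) = u := by
        rw [max'_congr' hset]
      simp only [← hu_def, hmax]
      exact flipAt_flipAt S u
  rw [hcancel, add_zero]
  have hnbc_sum : ∑ S ∈ univ.filter (fun S : Finset α => NoBrokenCircuit M S),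
      (-1 : ℤ[X]) ^ (r + S.card + (r - mrank M S)) * X ^ (r - mrank M S)
      = ∑ S ∈ univ.filter (fun S : Finset α => NoBrokenCircuit M S), X ^ (r - S.card) := by
    refine Finset.sum_congr rfl fun S hS => ?_
    have hind := indep_of_nbc hE (Finset.mem_filter.mp hS).2
    have h1 : mrank M S = S.card := mrank_indep_eq hind
    have h2 : S.card ≤ r := hr ▸ card_le_mrank (Finset.subset_univ S) hind
    rw [h1, show r + S.card + (r - S.card) = 2 * r by omega, pow_mul]
    norm_num
  rw [hnbc_sum]
  -- LHS
  rw [← Finset.sum_fiberwise_of_maps_to (t := range (r + 1)) (g := Finset.card)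
    (fun S hS => Finset.mem_range.mpr (Nat.lt_succ_of_le (hr ▸ card_le_mrank
      (Finset.subset_univ S) (indep_of_nbc hE (Finset.mem_filter.mp hS).2))))
    (fun S => (X : ℤ[X]) ^ (r - S.card))]
  refine Finset.sum_congr rfl fun i hi => ?_
  have hfe : (univ.filter fun S : Finset α => NoBrokenCircuit M S).filter (fun S => S.card = i)
      = univ.filter (fun S : Finset α => S.card = i ∧ NoBrokenCircuit M S) := by
    rw [Finset.filter_filter]
    exact Finset.filter_congr (fun S _ => by tauto)
  rw [Finset.sum_congr rfl (fun S hS => by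
      rw [(Finset.mem_filter.mp hS).2] :
      ∀ S ∈ (univ.filter fun S : Finset α => NoBrokenCircuit M S).filter (fun S => S.card = i),
        (X : ℤ[X]) ^ (r - S.card) = X ^ (r - i)),
    Finset.sum_const, hfe, nsmul_eq_mul, map_natCast]
end
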